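/- arXiv:2605.19836 — 8 statements merged into one kernel-verified Lean document; each statement's English description precedes it below -/
import Mathlib

section
/- Let R be a commutative ring, Q a minimal prime ideal of R (a prime ideal minimal over the zero ideal), S = R \ Q, and P a proper ideal of R. Then P is an S-ideal of R if and only if P is a Q-primary ideal of R, i.e., P is a primary ideal with √P = Q. -/
/-- A subset `S` of a commutative ring is multiplicatively closed:
nonempty and closed under multiplication. -/
def MulClosed {R : Type*} [CommRing R] (S : Set R) : Prop :=
  S.Nonempty ∧ ∀ x ∈ S, ∀ y ∈ S, x * y ∈ S

/-- A proper ideal `P` is an `S`-ideal if `x * y ∈ P` and `x ∈ S` imply `y ∈ P`. -/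
def SIdeal {R : Type*} [CommRing R] (S : Set R) (P : Ideal R) : Prop :=
  P ≠ ⊤ ∧ ∀ x y : R, x * y ∈ P → x ∈ S → y ∈ P

/-! A minimal prime `Q` of `R` is the unique prime of the zero-dimensional local ring `R_Q`,
so every element of `Q` becomes nilpotent there: some power of it is killed by an element
outside `Q`. An `S`-ideal `P` for `S = R \ Q` therefore contains a power of every element of `Q`,
while it lies inside `Q` since it is proper; hence `√P = Q`, and the `S`-ideal property is then
exactly the primary condition. -/

section

variable {R : Type*} [CommRing R]

theorem Ideal.exists_mul_pow_eq_zero_of_mem_minimalPrimes {Q : Ideal R}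
    (hQ : Q ∈ minimalPrimes R) {q : R} (hq : q ∈ Q) : ∃ s ∉ Q, ∃ n : ℕ, s * q ^ n = 0 := by
  have : Q.IsPrime := hQ.1.1
  let L := Localization.AtPrime Q
  have : Ring.KrullDimLE 0 L := Ring.KrullDimLE.of_isLocalization Q hQ L
  obtain ⟨n, hn⟩ := Ring.KrullDimLE.isNilpotent_iff_mem_maximalIdeal.mpr
    ((IsLocalization.AtPrime.to_map_mem_maximal_iff L Q q).mpr hq)
  rw [← map_pow] at hn
  obtain ⟨⟨s, hs⟩, hsq⟩ := (IsLocalization.map_eq_zero_iff Q.primeCompl L (q ^ n)).mp hn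
  exact ⟨s, hs, n, hsq⟩

namespace SIdeal

variable {S : Set R} {P Q : Ideal R}

theorem disjoint (h : SIdeal S P) : Disjoint S P :=
  Set.disjoint_left.mpr fun s hs hsP ↦
    h.1 (P.eq_top_iff_one.mpr (h.2 s 1 (by rwa [mul_one]) hs))

theorem le_of_compl (h : SIdeal (Q : Set R)ᶜ P) : P ≤ Q := fun _ hp ↦
  by_contra fun hpQ ↦ Set.disjoint_left.mp h.disjoint hpQ hp

theorem radical_eq_of_mem_minimalPrimes (hQ : Q ∈ minimalPrimes R)
    (h : SIdeal (Q : Set R)ᶜ P) : P.radical = Q := by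
  refine le_antisymm ?_ fun q hq ↦ ?_
  · simpa only [hQ.1.1.radical] using Ideal.radical_mono h.le_of_compl
  · obtain ⟨s, hs, n, hsq⟩ := Ideal.exists_mul_pow_eq_zero_of_mem_minimalPrimes hQ hq
    exact ⟨n, h.2 s (q ^ n) (hsq ▸ P.zero_mem) hs⟩

theorem isPrimary_of_radical_eq (h : SIdeal (Q : Set R)ᶜ P) (hrad : P.radical = Q) :
    P.IsPrimary := by
  refine Ideal.isPrimary_iff.mpr ⟨h.1, fun {x y} hxy ↦ ?_⟩
  by_cases hy : y ∈ Q
  · exact .inr (hrad ▸ hy)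
  · exact .inl (h.2 y x (mul_comm x y ▸ hxy) hy)

end SIdeal

theorem Ideal.IsPrimary.sIdeal_compl_radical {P : Ideal R} (hP : P.IsPrimary) :
    SIdeal (P.radical : Set R)ᶜ P :=
  ⟨hP.ne_top, fun x y hxy hx ↦
    ((Ideal.isPrimary_iff.mp hP).2 (mul_comm x y ▸ hxy)).resolve_right hx⟩

end

theorem stmt_10_general {R : Type*} [CommRing R] (Q P : Ideal R)
    (hQ : Q ∈ minimalPrimes R) :
    SIdeal ((Q : Set R)ᶜ) P ↔ (P.IsPrimary ∧ P.radical = Q) := by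
  constructor
  · intro h
    have hrad := h.radical_eq_of_mem_minimalPrimes hQ
    exact ⟨h.isPrimary_of_radical_eq hrad, hrad⟩
  · rintro ⟨hP, rfl⟩
    exact hP.sIdeal_compl_radical

theorem stmt_10 {R : Type*} [CommRing R] (Q P : Ideal R)
    (hQ : Q ∈ minimalPrimes R) (hP : P ≠ ⊤) :
    SIdeal ((Q : Set R)ᶜ) P ↔ (P.IsPrimary ∧ P.radical = Q) :=
  stmt_10_general Q P hQ
end

section
/- Let R be a commutative ring, let Q₁, …, Q_m be minimal prime ideals of R (prime ideals minimal over the zero ideal), and let S = R \ (Q₁ ∪ … ∪ Q_m). If P is an S-ideal of R, then P = P₁ ∩ … ∩ P_m, where P_j = {x ∈ R | t·x ∈ P for some t ∉ Q_j} for each 1 ≤ j ≤ m. -/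
theorem stmt_11 {R : Type*} [CommRing R] {m : ℕ} (Q : Fin m → Ideal R) (P : Ideal R)
    (hQ : ∀ j, Q j ∈ minimalPrimes R)
    (hP : SIdeal ((⋃ j, (Q j : Set R))ᶜ) P) :
    (P : Set R) = ⋂ j, {x : R | ∃ t ∉ Q j, t * x ∈ P} := by
  rcases Nat.eq_zero_or_pos m with hm | hm
  · subst hm
    exfalso
    apply hP.1
    rw [Ideal.eq_top_iff_one]
    exact hP.2 0 1 (by simp) (by simp)
  ext x
  simp only [SetLike.mem_coe, Set.mem_iInter, Set.mem_setOf_eq]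
  constructor
  · intro hx j
    exact ⟨1, (hQ j).1.1.ne_top ∘ (Ideal.eq_top_iff_one _).2, by simpa using hx⟩
  · intro h
    set I : Ideal R := P.colon (Ideal.span {x}) with hI
    have hIj : ∀ j, ¬ I ≤ Q j := by
      intro j hle
      obtain ⟨t, htQ, htP⟩ := h j
      exact htQ (hle (Ideal.mem_colon_span_singleton.2 htP))
    have hnot : ¬ ((I : Set R) ⊆ ⋃ j ∈ ((Finset.univ : Finset (Fin m)) : Set (Fin m)), (Q j : Set R)) := by
      rw [Ideal.subset_union_prime ⟨0, hm⟩ ⟨0, hm⟩ (fun i _ _ _ => (hQ i).1.1)]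
      rintro ⟨i, -, hle⟩
      exact hIj i hle
    rw [Set.not_subset] at hnot
    obtain ⟨t, htI, htU⟩ := hnot
    refine hP.2 t x (Ideal.mem_colon_span_singleton.1 htI) ?_
    simpa using htU
end

section
/- Let R be a commutative ring and S a multiplicatively closed subset of R such that every element of S is von Neumann regular (for each s ∈ S there exists y ∈ R with s = s²·y). Then every S-ideal of R is a semiprime ideal (x² ∈ P implies x ∈ P, i.e., P is a radical ideal) if and only if the localization S⁻¹R is a von Neumann regular ring (for every a ∈ S⁻¹R there exists b ∈ S⁻¹R with a = a²·b). -/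
lemma key_sat {R : Type*} [CommRing R] (S : Submonoid R)
    (h : ∀ P : Ideal R, SIdeal (S : Set R) P → ∀ x : R, x * x ∈ P → x ∈ P)
    (x : R) : ∃ u ∈ S, ∃ r : R, u * x = x * x * r := by
  by_contra hc
  push_neg at hc
  set Q : Ideal R :=
    { carrier := {y | ∃ u ∈ S, x * x ∣ u * y}
      zero_mem' := ⟨1, S.one_mem, by simp⟩
      add_mem' := by
        rintro a b ⟨u, hu, c, hc⟩ ⟨v, hv, d, hd⟩
        refine ⟨u * v, S.mul_mem hu hv, v * c + u * d, ?_⟩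
        calc u * v * (a + b) = v * (u * a) + u * (v * b) := by ring
          _ = v * (x * x * c) + u * (x * x * d) := by rw [hc, hd]
          _ = x * x * (v * c + u * d) := by ring
      smul_mem' := by
        rintro c a ⟨u, hu, d, hd⟩
        exact ⟨u, hu, c * d, by simp only [smul_eq_mul]; rw [show u * (c * a) = c * (u * a) by ring, hd]; ring⟩ } with hQ
  have hQS : SIdeal (S : Set R) Q := by
    constructor
    · intro htop
      have h1 : (1 : R) ∈ Q := htop ▸ Submodule.mem_top
      obtain ⟨u, hu, d, hd⟩ := h1
      rw [mul_one] at hd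
      exact hc u hu (d * x) (by rw [hd]; ring)
    · rintro a b ⟨u, hu, d, hd⟩ ha
      exact ⟨u * a, S.mul_mem hu ha, d, by rw [mul_assoc]; exact hd⟩
  have hx2 : x * x ∈ Q := ⟨1, S.one_mem, 1, by ring⟩
  obtain ⟨u, hu, d, hd⟩ := h Q hQS x hx2
  exact hc u hu d hd

theorem stmt_13 {R : Type*} [CommRing R] (S : Submonoid R)
    (hreg : ∀ s ∈ S, ∃ y : R, s = s * s * y) :
    (∀ P : Ideal R, SIdeal (S : Set R) P → ∀ x : R, x * x ∈ P → x ∈ P) ↔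
    (∀ a : Localization S, ∃ b : Localization S, a = a * a * b) := by
  constructor
  · intro h a
    induction a using Localization.induction_on with
    | H p =>
      obtain ⟨x, s⟩ := p
      obtain ⟨u, hu, r, hr⟩ := key_sat S h x
      refine ⟨Localization.mk (r * s) ⟨u, hu⟩, ?_⟩
      rw [Localization.mk_mul, Localization.mk_mul, Localization.mk_eq_mk_iff,
        Localization.r_iff_exists]
      refine ⟨1, ?_⟩
      simp only [Submonoid.coe_mul, Submonoid.coe_one, one_mul]
      have : (s : R) * s * u * x = s * s * (x * x * r) := by
        rw [mul_assoc ((s : R) * s), hr]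
      calc (s : R) * s * ((⟨u, hu⟩ : S) : R) * x = s * s * (x * x * r) := this
        _ = ↑s * (x * x * (r * ↑s)) := by ring
  · intro h P hP x hx2
    obtain ⟨hPtop, hPS⟩ := hP
    obtain ⟨b, hb⟩ := h (Localization.mk x 1)
    revert hb
    induction b using Localization.induction_on with
    | H p =>
      intro hb
      obtain ⟨y, t⟩ := p
      rw [Localization.mk_mul, Localization.mk_mul, Localization.mk_eq_mk_iff,
        Localization.r_iff_exists] at hb
      obtain ⟨c, hc⟩ := hb
      simp only [Submonoid.coe_mul, Submonoid.coe_one, one_mul, mul_one] at hc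
      -- hc : c * (t * x) = c * (x * x * y)  (roughly)
      have hmem : (↑c * ↑t : R) * x ∈ P := by
        have : (↑c * ↑t : R) * x = (↑c * y) * (x * x) := by
          rw [mul_assoc]
          rw [show (↑c : R) * y * (x * x) = ↑c * (x * x * y) by ring]
          exact hc
        rw [this]
        exact Ideal.mul_mem_left P _ hx2
      exact hPS (↑c * ↑t) x hmem (S.mul_mem c.2 t.2)
end

section
/- Let R be a commutative ring and S a multiplicatively closed subset of R such that S = {x ∈ R | the image x/1 of x in the localization S⁻¹R is a unit of S⁻¹R}. Then R is an integral domain with S = R \ {0} if and only if the zero ideal is an S-ideal of R and is the only S-ideal of R. -/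
theorem stmt_15 {R : Type*} [CommRing R] (S : Submonoid R)
    (hS : (S : Set R) = {x : R | IsUnit (algebraMap R (Localization S) x)}) :
    (IsDomain R ∧ (S : Set R) = {x : R | x ≠ 0}) ↔
    (SIdeal (S : Set R) (⊥ : Ideal R) ∧
      ∀ P : Ideal R, SIdeal (S : Set R) P → P = ⊥) := by
  constructor
  · rintro ⟨hdom, hSeq⟩
    have h0 : (0:R) ∉ (S : Set R) := by rw [hSeq]; simp
    have hbot : SIdeal (S : Set R) (⊥ : Ideal R) := by
      refine ⟨bot_ne_top, fun x y hxy hx => ?_⟩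
      have hxne : x ≠ 0 := by rw [hSeq] at hx; exact hx
      rw [Ideal.mem_bot] at hxy ⊢
      rcases mul_eq_zero.mp hxy with h | h
      · exact absurd h hxne
      · exact h
    refine ⟨hbot, fun P hP => ?_⟩
    ext p
    simp only [Ideal.mem_bot]
    constructor
    · intro hp
      by_contra hpne
      have hpS : p ∈ (S : Set R) := by rw [hSeq]; exact hpne
      have : (1:R) ∈ P := hP.2 p 1 (by simpa using hp) hpS
      exact hP.1 ((Ideal.eq_top_iff_one P).mpr this)
    · rintro rfl; exact P.zero_mem
  · rintro ⟨hbot, huniq⟩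
    have h10 : (1:R) ≠ 0 := by
      intro h
      exact hbot.1 ((Ideal.eq_top_iff_one _).mpr (by rw [Ideal.mem_bot]; exact h))
    have : Nontrivial R := nontrivial_of_ne 1 0 h10
    have h0S : (0:R) ∉ (S : Set R) := by
      intro h
      have : (1:R) ∈ (⊥ : Ideal R) := hbot.2 0 1 (by simp) h
      rw [Ideal.mem_bot] at this
      exact h10 this
    -- key: every element not in S is 0
    have key : ∀ x : R, x ∉ (S : Set R) → x = 0 := by
      intro x hx
      have hnu : ¬ IsUnit (algebraMap R (Localization S) x) := by
        rw [hS] at hx; exact hx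
      have : Nontrivial (Localization S) := by
        by_contra h
        rw [not_nontrivial_iff_subsingleton] at h
        exact hnu (isUnit_of_subsingleton _)
      obtain ⟨M, hM, hxM⟩ := exists_max_ideal_of_mem_nonunits (mem_nonunits_iff.mpr hnu)
      set f := algebraMap R (Localization S)
      set P := Ideal.comap f M with hPdef
      have hPS : SIdeal (S : Set R) P := by
        refine ⟨Ideal.comap_ne_top f hM.ne_top, fun a b hab ha => ?_⟩
        have haU : IsUnit (f a) := by rw [hS] at ha; exact ha
        have hmul : f a * f b ∈ M := by
          rw [← map_mul]; exact hab
        rcases hM.isPrime.mem_or_mem hmul with h | h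
        · exact absurd (M.eq_top_of_isUnit_mem h haU) hM.ne_top
        · exact h
      have hPb : P = ⊥ := huniq P hPS
      have : x ∈ P := hxM
      rw [hPb, Ideal.mem_bot] at this
      exact this
    have hnzd : ∀ x y : R, x * y = 0 → x = 0 ∨ y = 0 := by
      intro x y h
      by_cases hx : x ∈ (S : Set R)
      · right
        have := hbot.2 x y (by rw [Ideal.mem_bot]; exact h) hx
        rwa [Ideal.mem_bot] at this
      · left; exact key x hx
    have : NoZeroDivisors R := ⟨fun {a b} h => hnzd a b h⟩
    refine ⟨NoZeroDivisors.to_isDomain R, ?_⟩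
    ext x
    simp only [Set.mem_setOf_eq]
    constructor
    · intro hx h; exact h0S (h ▸ hx)
    · intro hx
      by_contra hxS
      exact hx (key x hxS)
end

section
/- Let R be a commutative ring, Q a proper ideal of R, and S = 1 + Q = {1 + q | q ∈ Q}. Then every proper ideal of R containing Q is an S-ideal of R. Moreover, if Q is contained in the Jacobson radical of R and P is a maximal element (with respect to inclusion) of the set of S-ideals of R, then Q ⊆ P. -/
theorem stmt_16 {R : Type*} [CommRing R] (Q : Ideal R) (hQ : Q ≠ ⊤) :
    (∀ P : Ideal R, P ≠ ⊤ → Q ≤ P → SIdeal {x : R | ∃ q ∈ Q, x = 1 + q} P) ∧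
    (Q ≤ (⊥ : Ideal R).jacobson →
      ∀ P : Ideal R, SIdeal {x : R | ∃ q ∈ Q, x = 1 + q} P →
        (∀ I : Ideal R, SIdeal {x : R | ∃ q ∈ Q, x = 1 + q} I → P ≤ I → I = P) →
        Q ≤ P) := by
  have part1 : ∀ P : Ideal R, P ≠ ⊤ → Q ≤ P →
      SIdeal {x : R | ∃ q ∈ Q, x = 1 + q} P := by
    intro P hP hQP
    refine ⟨hP, fun x y hxy hx => ?_⟩
    obtain ⟨q, hq, rfl⟩ := hx
    have : y = (1 + q) * y - q * y := by ring
    rw [this]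
    exact P.sub_mem hxy (P.mul_mem_right y (hQP hq))
  refine ⟨part1, fun _ P hP hmax => ?_⟩
  have hproper : P ⊔ Q ≠ ⊤ := by
    intro htop
    have h1 : (1 : R) ∈ P ⊔ Q := htop ▸ Submodule.mem_top
    obtain ⟨p, hp, q, hq, hpq⟩ := Submodule.mem_sup.mp h1
    have hmem : (1 + (-q)) * 1 ∈ P := by
      have : (1 + (-q)) * 1 = p := by rw [mul_one]; linear_combination -hpq
      rw [this]; exact hp
    have h1P : (1 : R) ∈ P := hP.2 _ _ hmem ⟨-q, Q.neg_mem hq, rfl⟩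
    exact hP.1 (Ideal.eq_top_of_isUnit_mem _ h1P isUnit_one)
  have := hmax (P ⊔ Q) (part1 _ hproper le_sup_right) le_sup_left
  calc Q ≤ P ⊔ Q := le_sup_right
    _ = P := this
end

section
/- Let R be a commutative ring and let S = R \ ⋃{Q | Q is a minimal prime ideal of R}. If P is a proper ideal of R such that for every p ∈ P the intersection of all minimal prime ideals of R containing p is contained in P, then P is an S-ideal of R. -/
theorem stmt_17 {R : Type*} [CommRing R] (P : Ideal R) (hP : P ≠ ⊤)
    (h : ∀ p ∈ P, ∀ x : R, (∀ Q ∈ minimalPrimes R, p ∈ Q → x ∈ Q) → x ∈ P) :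
    SIdeal {x : R | ∀ Q ∈ minimalPrimes R, x ∉ Q} P := by
  refine ⟨hP, fun x y hxy hx => ?_⟩
  refine h (x * y) hxy y fun Q hQ hxyQ => ?_
  have hprime : Q.IsPrime := hQ.1.1
  rcases hprime.mem_or_mem hxyQ with hxQ | hyQ
  · exact absurd hxQ (hx Q hQ)
  · exact hyQ
end

section
/- Let R be a commutative ring, S a multiplicatively closed subset of R containing 1, and let P, P₁, …, P_n be ideals of R such that P ⊆ P₁ ∪ … ∪ P_n and no P_j can be omitted from the union (for each j, P is not contained in ⋃_{i ≠ j} P_i). If for some index t the ideal P_t is an S-ideal of R and P_j ∩ S ≠ ∅ for every j ≠ t, then P ⊆ P_t. -/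
theorem stmt_18 {R : Type*} [CommRing R] (S : Set R) {n : ℕ}
    (P : Ideal R) (Pf : Fin n → Ideal R) (t : Fin n)
    (hS : MulClosed S) (h1 : (1 : R) ∈ S)
    (hcov : (P : Set R) ⊆ ⋃ j, (Pf j : Set R))
    (hirr : ∀ j, ¬ ((P : Set R) ⊆ ⋃ i ∈ {i : Fin n | i ≠ j}, (Pf i : Set R)))
    (ht : SIdeal S (Pf t))
    (hmeet : ∀ j, j ≠ t → ((Pf j : Set R) ∩ S).Nonempty) :
    P ≤ Pf t := by
  classical
  -- pick y ∈ P not in any Pf i for i ≠ t; then y ∈ Pf t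
  obtain ⟨y, hyP, hy⟩ := Set.not_subset.mp (hirr t)
  have hy' : ∀ i : Fin n, i ≠ t → y ∉ Pf i := by
    intro i hi hyi
    exact hy (Set.mem_biUnion hi hyi)
  have hyt : y ∈ Pf t := by
    obtain ⟨i, hi⟩ := Set.mem_iUnion.mp (hcov hyP)
    by_cases h : i = t
    · exact h ▸ hi
    · exact absurd hi (hy' i h)
  -- build s ∈ S with s ∈ Pf j for all j ≠ t
  set f : Fin n → R := fun j => if h : j = t then 1 else (hmeet j h).choose with hf
  have hfS : ∀ j, f j ∈ S := by
    intro j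
    by_cases h : j = t
    · simp [hf, h, h1]
    · simpa [hf, h] using (hmeet j h).choose_spec.2
  have hfP : ∀ j, j ≠ t → f j ∈ Pf j := by
    intro j h
    simpa [hf, h] using (hmeet j h).choose_spec.1
  set s : R := ∏ j, f j with hs
  have hsS : s ∈ S := by
    apply Finset.prod_induction f (· ∈ S)
    · intro a b ha hb; exact hS.2 a ha b hb
    · exact h1
    · intro j _; exact hfS j
  have hsP : ∀ j, j ≠ t → s ∈ Pf j := by
    intro j h
    obtain ⟨c, hc⟩ := Finset.dvd_prod_of_mem f (Finset.mem_univ j)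
    rw [hs, hc]
    exact Ideal.mul_mem_right _ _ (hfP j h)
  -- main argument
  intro x hx
  have hz : s * x + y ∈ P := P.add_mem (P.mul_mem_left s hx) hyP
  obtain ⟨i, hi⟩ := Set.mem_iUnion.mp (hcov hz)
  by_cases h : i = t
  · subst h
    have : s * x ∈ Pf i := by
      have := (Pf i).sub_mem hi hyt
      simpa using this
    exact ht.2 s x this hsS
  · exfalso
    have hsx : s * x ∈ Pf i := Ideal.mul_mem_right _ _ (hsP i h)
    have : y ∈ Pf i := by
      have := (Pf i).sub_mem hi hsx
      simpa using this
    exact hy' i h this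
end

section
/- Let R be a commutative ring, S a multiplicatively closed subset of R, and P ⊆ Q ideals of R with Q proper. Let π : R → R/P be the quotient map and T = π(S). Then Q is an S-ideal of R if and only if the image Q/P of Q in R/P is a T-ideal of R/P. -/
theorem stmt_19 {R : Type*} [CommRing R] (S : Set R) (P Q : Ideal R)
    (hS : MulClosed S) (hPQ : P ≤ Q) (hQ : Q ≠ ⊤) :
    SIdeal S Q ↔
      SIdeal ((Ideal.Quotient.mk P) '' S) (Q.map (Ideal.Quotient.mk P)) := by
  have hmem : ∀ x : R, Ideal.Quotient.mk P x ∈ Q.map (Ideal.Quotient.mk P) ↔ x ∈ Q :=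
    fun x => Ideal.mem_quotient_iff_mem hPQ
  have hsurj := Ideal.Quotient.mk_surjective (I := P)
  constructor
  · rintro ⟨-, h⟩
    refine ⟨?_, ?_⟩
    · intro htop
      apply hQ
      rw [Ideal.eq_top_iff_one]
      have : (1 : R ⧸ P) ∈ Q.map (Ideal.Quotient.mk P) := htop ▸ Submodule.mem_top
      rw [show (1 : R ⧸ P) = Ideal.Quotient.mk P 1 from rfl, hmem] at this
      exact this
    · rintro x y hxy ⟨s, hs, rfl⟩
      obtain ⟨y', rfl⟩ := hsurj y
      rw [← map_mul, hmem] at hxy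
      rw [hmem]
      exact h s y' hxy hs
  · rintro ⟨-, h⟩
    refine ⟨hQ, fun x y hxy hx => ?_⟩
    rw [← hmem]
    exact h _ _ (by rw [← map_mul, hmem]; exact hxy) ⟨x, hx, rfl⟩
end
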